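/- Fix ω > 0, θ ∈ (0,π/2), and t > 0 with ωt + θ ∈ (0, π/2). Define m := −(1/ω)cotθ, y := (1/ω)cosθ·csc(ωt+θ), z := m + (1/ω)cos²θ·(cotθ − cot(ωt+θ)). Then z − m > 0 and − y·m/(z − m) = 1/(ω·sin(ωt)). -/

import Mathlib

/-! The only trigonometry is `cot a - cot b = sin (b - a) / (sin a * sin b)`, applied with
`a = θ` and `b = ωt + θ`: it gives
`z - m = cos² θ · sin (ωt) / (ω · sin θ · sin (ωt + θ))`, after which the factors `cos θ`,
`sin θ` and `sin (ωt + θ)` cancel in `-y m / (z - m)`. -/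

open Real

theorem Real.cot_sub_cot {a b : ℝ} (ha : sin a ≠ 0) (hb : sin b ≠ 0) :
    cot a - cot b = sin (b - a) / (sin a * sin b) := by
  rw [cot_eq_cos_div_sin, cot_eq_cos_div_sin, div_sub_div _ _ ha hb, sin_sub]
  ring

theorem eig_equal_q (omega theta t : ℝ) (homega : 0 < omega)
    (htheta : theta ∈ Set.Ioo (0 : ℝ) (π / 2)) (ht : 0 < t)
    (hsum : omega * t + theta ∈ Set.Ioo (0 : ℝ) (π / 2)) :
    let m := -(1 / omega) * Real.cot theta
    let y := (1 / omega) * Real.cos theta / Real.sin (omega * t + theta)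
    let z := m + (1 / omega) * Real.cos theta ^ 2 *
      (Real.cot theta - Real.cot (omega * t + theta))
    0 < z - m ∧ -(y * m) / (z - m) = 1 / (omega * Real.sin (omega * t)) := by
  intro m y z
  have hsin_θ : 0 < sin theta :=
    sin_pos_of_pos_of_lt_pi htheta.1 (by linarith [htheta.2, pi_pos])
  have hcos_θ : 0 < cos theta := cos_pos_of_mem_Ioo ⟨by linarith [htheta.1, pi_pos], htheta.2⟩
  have hsin_sum : 0 < sin (omega * t + theta) :=
    sin_pos_of_pos_of_lt_pi hsum.1 (by linarith [hsum.2, pi_pos])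
  have hsin_ωt : 0 < sin (omega * t) :=
    sin_pos_of_pos_of_lt_pi (mul_pos homega ht) (by linarith [hsum.2, htheta.1, pi_pos])
  have hzm : z - m = cos theta ^ 2 * sin (omega * t) /
      (omega * (sin theta * sin (omega * t + theta))) := by
    simp only [z, add_sub_cancel_left]
    rw [cot_sub_cot hsin_θ.ne' hsin_sum.ne', add_sub_cancel_right]
    field_simp
  refine ⟨hzm ▸ by positivity, ?_⟩
  rw [hzm]
  simp only [y, m, cot_eq_cos_div_sin]
  field_simp
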